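/- arXiv:2303.00531 — 6 statements merged into one kernel-verified Lean document; each statement's English description precedes it below -/
import Mathlib

section
/- Let λ, μ, ν, s, t be real numbers with 0 < λ < μ, ν > 0, 0 < s < 1 and t > 0. Define G(s,t) = (μ−λ)^{ν/λ} · ( s(μe^{(λ−μ)t} − λ) − μ(e^{(λ−μ)t} − 1) )^i / ( μ − λe^{(λ−μ)t} + λs(e^{(λ−μ)t} − 1) )^{ν/λ + i} for a fixed natural number i (here the i-th power is an integer power and the real exponents are real powers of positive bases). Then G satisfies the first-order linear partial differential equation ∂G/∂t (s,t) = (μ − λs)(1 − s) ∂G/∂s (s,t) + ν(s − 1) G(s,t), and moreover G(s,0) = s^i for all s ∈ (0,1). -/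
/-!
Write `G = C · N^i / D^c` with `c = ν/λ + i`. The numerator `N` and the denominator `D` both
solve the same transport equation `∂ₜf = (μ - λs)(1 - s) ∂ₛf + λ(1 - s) f`. The operator
`∂ₜ - (μ - λs)(1 - s) ∂ₛ` is a derivation, so `N^i D^{-c}` solves it with zeroth-order
coefficient `λ(1 - s)(i - c) = ν(s - 1)`, which is the PDE. At `t = 0` we have `N = s(μ - λ)`
and `D = μ - λ`.
-/

open Real

/-- The candidate probability generating function of the linear birth and death
process with immigration (case `λ ≠ μ`), as a function of `s` and `t`. -/
noncomputable def G (lam mu nu : ℝ) (i : ℕ) (s t : ℝ) : ℝ :=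
  (mu - lam) ^ (nu / lam) *
      (s * (mu * exp ((lam - mu) * t) - lam) - mu * (exp ((lam - mu) * t) - 1)) ^ i /
    (mu - lam * exp ((lam - mu) * t) + lam * s * (exp ((lam - mu) * t) - 1)) ^ (nu / lam + (i : ℝ))

theorem HasDerivAt.const_mul_pow_div_rpow {f g : ℝ → ℝ} {f' g' x : ℝ}
    (hf : HasDerivAt f f' x) (hg : HasDerivAt g g' x) (hgx : 0 < g x) (C : ℝ) (n : ℕ) (c : ℝ) :
    HasDerivAt (fun y => C * f y ^ n / g y ^ c)
      (C * (n * f x ^ (n - 1) * f' * g x - c * f x ^ n * g') / g x ^ (c + 1)) x := by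
  have h := ((hf.pow n).const_mul C).div (hg.rpow_const (p := c) (Or.inl hgx.ne'))
    (rpow_pos_of_pos hgx c).ne'
  refine h.congr_deriv ?_
  simp only [Pi.pow_apply]
  rw [rpow_add hgx, rpow_one, rpow_sub_one hgx.ne']
  field_simp

theorem transport_pow_div_rpow {C f g a k fs gs : ℝ} (n : ℕ) (c : ℝ) (hg : 0 < g) :
    C * (n * f ^ (n - 1) * (a * fs + k * f) * g - c * f ^ n * (a * gs + k * g)) / g ^ (c + 1)
      = a * (C * (n * f ^ (n - 1) * fs * g - c * f ^ n * gs) / g ^ (c + 1))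
        + k * (n - c) * (C * f ^ n / g ^ c) := by
  -- also for `n = 0`, where `n - 1` truncates
  have hfn : (n : ℝ) * f ^ (n - 1) * f = n * f ^ n := by
    cases n with
    | zero => simp
    | succ m => rw [Nat.add_sub_cancel, pow_succ]; ring
  rw [rpow_add hg, rpow_one]
  field_simp
  linear_combination (k * C * g) * hfn

theorem deriv_const_mul_pow_div_rpow_of_transport {f g : ℝ → ℝ → ℝ} {s t a k fs gs : ℝ}
    (hfs : HasDerivAt (f · t) fs s) (hgs : HasDerivAt (g · t) gs s)
    (hft : HasDerivAt (f s ·) (a * fs + k * f s t) t)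
    (hgt : HasDerivAt (g s ·) (a * gs + k * g s t) t)
    (hg : 0 < g s t) (C : ℝ) (n : ℕ) (c : ℝ) :
    deriv (fun τ => C * f s τ ^ n / g s τ ^ c) t
      = a * deriv (fun σ => C * f σ t ^ n / g σ t ^ c) s
        + k * (n - c) * (C * f s t ^ n / g s t ^ c) := by
  rw [(hft.const_mul_pow_div_rpow hgt hg C n c).deriv,
    (hfs.const_mul_pow_div_rpow hgs hg C n c).deriv, transport_pow_div_rpow n c hg]

theorem hasDerivAt_exp_const_mul (a t : ℝ) :
    HasDerivAt (fun τ => exp (a * τ)) (a * exp (a * t)) t := by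
  simpa [mul_comm] using ((hasDerivAt_id t).const_mul a).exp

section BirthDeath

variable (lam mu : ℝ)

noncomputable def birthDeathNum (s t : ℝ) : ℝ :=
  s * (mu * exp ((lam - mu) * t) - lam) - mu * (exp ((lam - mu) * t) - 1)

noncomputable def birthDeathDen (s t : ℝ) : ℝ :=
  mu - lam * exp ((lam - mu) * t) + lam * s * (exp ((lam - mu) * t) - 1)

theorem G_eq (nu : ℝ) (i : ℕ) (s t : ℝ) :
    G lam mu nu i s t = (mu - lam) ^ (nu / lam) * birthDeathNum lam mu s t ^ i
      / birthDeathDen lam mu s t ^ (nu / lam + (i : ℝ)) := rfl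

variable {lam mu}

theorem G_zero (hlm : lam < mu) (nu : ℝ) (i : ℕ) (s : ℝ) : G lam mu nu i s 0 = s ^ i := by
  have hml : 0 < mu - lam := sub_pos.mpr hlm
  simp only [G, mul_zero, exp_zero, sub_self, mul_one, sub_zero, add_zero]
  rw [rpow_add hml, rpow_natCast, mul_pow]
  field_simp [(rpow_pos_of_pos hml (nu / lam)).ne', hml.ne']

theorem birthDeathDen_pos (hlam : 0 ≤ lam) (hlm : lam < mu) {s t : ℝ} (hs : s < 1)
    (ht : 0 ≤ t) :
    0 < birthDeathDen lam mu s t := by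
  have he : exp ((lam - mu) * t) ≤ 1 := exp_le_one_iff.mpr (by nlinarith)
  have hsplit : birthDeathDen lam mu s t
      = (mu - lam) + lam * (1 - exp ((lam - mu) * t)) * (1 - s) := by
    unfold birthDeathDen; ring
  have hcorr : 0 ≤ lam * (1 - exp ((lam - mu) * t)) * (1 - s) :=
    mul_nonneg (mul_nonneg hlam (by linarith)) (by linarith)
  rw [hsplit]
  linarith

variable (lam mu)

theorem hasDerivAt_birthDeathNum_fst (s t : ℝ) :
    HasDerivAt (birthDeathNum lam mu · t) (mu * exp ((lam - mu) * t) - lam) s :=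
  (((hasDerivAt_id' s).mul_const (mu * exp ((lam - mu) * t) - lam)).sub_const
    (mu * (exp ((lam - mu) * t) - 1))).congr_deriv (one_mul _)

theorem hasDerivAt_birthDeathDen_fst (s t : ℝ) :
    HasDerivAt (birthDeathDen lam mu · t) (lam * (exp ((lam - mu) * t) - 1)) s :=
  ((((hasDerivAt_id' s).const_mul lam).mul_const
    (exp ((lam - mu) * t) - 1)).const_add (mu - lam * exp ((lam - mu) * t))).congr_deriv
    (by ring)

theorem hasDerivAt_birthDeathNum_snd (s t : ℝ) :
    HasDerivAt (birthDeathNum lam mu s ·)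
      ((mu - lam * s) * (1 - s) * (mu * exp ((lam - mu) * t) - lam)
        + lam * (1 - s) * birthDeathNum lam mu s t) t := by
  have he := hasDerivAt_exp_const_mul (lam - mu) t
  have h := ((he.const_mul mu).sub_const lam).const_mul s |>.sub ((he.sub_const 1).const_mul mu)
  refine h.congr_deriv ?_
  unfold birthDeathNum
  ring

theorem hasDerivAt_birthDeathDen_snd (s t : ℝ) :
    HasDerivAt (birthDeathDen lam mu s ·)
      ((mu - lam * s) * (1 - s) * (lam * (exp ((lam - mu) * t) - 1))
        + lam * (1 - s) * birthDeathDen lam mu s t) t := by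
  have he := hasDerivAt_exp_const_mul (lam - mu) t
  have h := (he.const_mul lam).const_sub mu |>.add ((he.sub_const 1).const_mul (lam * s))
  refine h.congr_deriv ?_
  unfold birthDeathDen
  ring

end BirthDeath

theorem stmt_0_general (lam mu nu s t : ℝ) (i : ℕ)
    (hlam : 0 < lam) (hlm : lam < mu)
    (hs1 : s < 1) (ht : 0 < t) :
    deriv (fun τ => G lam mu nu i s τ) t
        = (mu - lam * s) * (1 - s) * deriv (fun σ => G lam mu nu i σ t) s
          + nu * (s - 1) * G lam mu nu i s t
      ∧ ∀ σ ∈ Set.Ioo (0 : ℝ) 1, G lam mu nu i σ 0 = σ ^ i := by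
  refine ⟨?_, fun σ _ => G_zero hlm nu i σ⟩
  simp only [G_eq]
  rw [deriv_const_mul_pow_div_rpow_of_transport (hasDerivAt_birthDeathNum_fst lam mu s t)
    (hasDerivAt_birthDeathDen_fst lam mu s t) (hasDerivAt_birthDeathNum_snd lam mu s t)
    (hasDerivAt_birthDeathDen_snd lam mu s t) (birthDeathDen_pos hlam.le hlm hs1 ht.le)]
  field_simp
  ring

/-- `G` solves the first-order linear PDE
`∂G/∂t = (μ - λ s)(1 - s) ∂G/∂s + ν (s - 1) G` with initial condition `G(s,0) = s^i`. -/
theorem stmt_0 (lam mu nu s t : ℝ) (i : ℕ)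
    (hlam : 0 < lam) (hlm : lam < mu) (hnu : 0 < nu)
    (hs : 0 < s) (hs1 : s < 1) (ht : 0 < t) :
    deriv (fun τ => G lam mu nu i s τ) t
        = (mu - lam * s) * (1 - s) * deriv (fun σ => G lam mu nu i σ t) s
          + nu * (s - 1) * G lam mu nu i s t
      ∧ ∀ σ ∈ Set.Ioo (0 : ℝ) 1, G lam mu nu i σ 0 = σ ^ i :=
  stmt_0_general lam mu nu s t i hlam hlm hs1 ht
end

section
/- Let 0 < λ < μ, ν > 0 be real numbers, t ≥ 0, i a natural number, and s ∈ [0,1). Set q(t) = (μ−λ)/(μ − λe^{(λ−μ)t}) and r = ν/λ. Define for each natural number j: p_{i,j}(t) = q(t)^r · Σ_{l=0}^{min(i,j)} C(i,l) · binom(r+i+j−l−1, j−l) · (μ/λ)^{i−l} · (1−q(t))^{i+j−2l} · (1 − (μ/λ + 1)(1−q(t)))^l, where C(i,l) is the usual binomial coefficient and binom(x,k) = (∏_{m=0}^{k−1}(x−m))/k! is the generalized binomial coefficient for real x and natural k. Then the series Σ_{j=0}^{∞} p_{i,j}(t) s^j converges (in the sense of HasSum) with sum equal to G_i(s,t) :=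 (μ−λ)^{ν/λ} · ( s(μe^{(λ−μ)t} − λ) − μ(e^{(λ−μ)t} − 1) )^i / ( μ − λe^{(λ−μ)t} + λs(e^{(λ−μ)t} − 1) )^{ν/λ + i}. -/
open Real

/-- Generalized binomial coefficient `binom(x, k) = x(x-1)⋯(x-k+1)/k!` for real `x`. -/
noncomputable def genBinom (x : ℝ) (k : ℕ) : ℝ :=
  (∏ m ∈ Finset.range k, (x - m)) / (Nat.factorial k)

/-- `q(t) = (μ-λ)/(μ - λ e^{(λ-μ)t})`. -/
noncomputable def qfun (lam mu t : ℝ) : ℝ :=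
  (mu - lam) / (mu - lam * exp ((lam - mu) * t))

/-- The claimed transition probabilities `p_{i,j}(t)` of the linear birth and death
process with immigration. -/
noncomputable def pTrans (lam mu nu : ℝ) (i j : ℕ) (t : ℝ) : ℝ :=
  qfun lam mu t ^ (nu / lam) *
    ∑ l ∈ Finset.range (min i j + 1),
      (i.choose l : ℝ) * genBinom (nu / lam + (i : ℝ) + (j : ℝ) - (l : ℝ) - 1) (j - l) *
        (mu / lam) ^ (i - l) * (1 - qfun lam mu t) ^ (i + j - 2 * l) *
        (1 - (mu / lam + 1) * (1 - qfun lam mu t)) ^ l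

/-!
With `x = 1 - q(t)`, `a = μ/λ` and `c = 1 - (a + 1) x`, the `l`-th summand of `p_{i,j}(t) s^j` is
`C(i,l) (c s)^l (a x)^(i-l)` times the `(j-l)`-th term of the binomial series of
`(1 - x s)^(-(ν/λ + i))`. Summing over `j` for each `l`, and then over `l` by the binomial theorem,
gives `q^(ν/λ) (c s + a x)^i (1 - x s)^(-(ν/λ + i))`, which is `G_i(s,t)` once everything is put
over the common denominator `μ - λ e^{(λ-μ)t}`.
-/

open Finset

lemma genBinom_eq_ringChoose (x : ℝ) (k : ℕ) : genBinom x k = Ring.choose x k := by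
  rw [genBinom, Ring.choose_eq_smul, ← Polynomial.aeval_eq_smeval, Polynomial.aeval_def,
    Polynomial.eval₂_eq_eval_map, descPochhammer_map, descPochhammer_eval_eq_prod_range,
    smul_eq_mul, div_eq_inv_mul]

lemma hasSum_genBinom_mul_pow (a : ℝ) {z : ℝ} (hz : |z| < 1) :
    HasSum (fun k : ℕ => genBinom (a + k - 1) k * z ^ k) ((1 - z) ^ (-a)) := by
  have hmem : z ∈ Metric.eball (0 : ℝ) 1 := by
    simpa [edist_zero_right, enorm_eq_nnnorm, ← NNReal.coe_lt_coe] using hz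
  have := (Real.one_div_one_sub_rpow_hasFPowerSeriesOnBall_zero a).hasSum hmem
  simp only [FormalMultilinearSeries.ofScalars_apply_eq, smul_eq_mul, zero_add] at this
  rw [Real.rpow_neg (by linarith [le_abs_self z]), ← one_div]
  simpa only [genBinom_eq_ringChoose] using this

lemma hasSum_choose_mul_genBinom_convolution (ρ a c x s : ℝ) (i : ℕ) (hxs : |x * s| < 1) :
    HasSum (fun j : ℕ => (∑ l ∈ range (min i j + 1),
        (i.choose l : ℝ) * genBinom (ρ + i + j - l - 1) (j - l) * a ^ (i - l) *
          x ^ (i + j - 2 * l) * c ^ l) * s ^ j)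
      ((c * s + a * x) ^ i * (1 - x * s) ^ (-(ρ + i))) := by
  set T : ℕ → ℕ → ℝ := fun l j => (i.choose l : ℝ) * genBinom (ρ + i + j - l - 1) (j - l) *
    a ^ (i - l) * x ^ (i + j - 2 * l) * c ^ l * s ^ j
  have hterm : ∀ l ∈ range (i + 1), HasSum (fun j => if l ≤ j then T l j else 0)
      ((i.choose l : ℝ) * (c * s) ^ l * (a * x) ^ (i - l) * (1 - x * s) ^ (-(ρ + i))) := by
    intro l hl
    have hli : l ≤ i := Nat.lt_succ_iff.mp (mem_range.mp hl)
    rw [← (add_left_injective l).hasSum_iff (f := fun j => if l ≤ j then T l j else 0)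
      fun j hj => if_neg fun hlj => hj ⟨j - l, Nat.sub_add_cancel hlj⟩]
    refine ((hasSum_genBinom_mul_pow (ρ + i) hxs).mul_left
      ((i.choose l : ℝ) * (c * s) ^ l * (a * x) ^ (i - l))).congr_fun fun k => ?_
    simp only [Function.comp_apply, if_pos (Nat.le_add_left l k), T, Nat.add_sub_cancel]
    rw [show i + (k + l) - 2 * l = (i - l) + k by omega,
      show ρ + i + ((k + l : ℕ) : ℝ) - l - 1 = ρ + i + k - 1 by push_cast; ring]
    ring
  convert hasSum_sum hterm using 1
  · funext j
    rw [← sum_filter, sum_mul]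
    congr 1
    ext l
    simp only [mem_filter, mem_range]
    omega
  · rw [add_pow, sum_mul]
    refine sum_congr rfl fun l _ => by ring

section qfun

variable {lam mu t : ℝ}

lemma mul_exp_le_self (hlam : 0 ≤ lam) (hlm : lam ≤ mu) (ht : 0 ≤ t) :
    lam * exp ((lam - mu) * t) ≤ lam :=
  mul_le_of_le_one_right hlam <|
    exp_le_one_iff.mpr (mul_nonpos_of_nonpos_of_nonneg (by linarith) ht)

lemma qfun_denom_pos (hlam : 0 ≤ lam) (hlm : lam < mu) (ht : 0 ≤ t) :
    0 < mu - lam * exp ((lam - mu) * t) := by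
  linarith [mul_exp_le_self hlam hlm.le ht]

lemma qfun_pos (hlam : 0 ≤ lam) (hlm : lam < mu) (ht : 0 ≤ t) : 0 < qfun lam mu t :=
  div_pos (by linarith) (qfun_denom_pos hlam hlm ht)

lemma qfun_le_one (hlam : 0 ≤ lam) (hlm : lam < mu) (ht : 0 ≤ t) : qfun lam mu t ≤ 1 := by
  rw [qfun, div_le_one (qfun_denom_pos hlam hlm ht)]
  linarith [mul_exp_le_self hlam hlm.le ht]

lemma qfun_rpow_mul_eq_G (nu s : ℝ) (i : ℕ) (hlam : 0 < lam) (hlm : lam < mu) (ht : 0 ≤ t)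
    (hs : 0 < 1 - (1 - qfun lam mu t) * s) :
    qfun lam mu t ^ (nu / lam) *
        (((1 - (mu / lam + 1) * (1 - qfun lam mu t)) * s + mu / lam * (1 - qfun lam mu t)) ^ i *
          (1 - (1 - qfun lam mu t) * s) ^ (-(nu / lam + i))) =
      G lam mu nu i s t := by
  rw [G]
  set E := exp ((lam - mu) * t)
  set D := mu - lam * E
  set N := s * (mu * E - lam) - mu * (E - 1)
  set B := mu - lam * E + lam * s * (E - 1)
  have hD : 0 < D := qfun_denom_pos hlam.le hlm ht
  have hq : qfun lam mu t = (mu - lam) / D := rfl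
  have hN : (1 - (mu / lam + 1) * (1 - qfun lam mu t)) * s + mu / lam * (1 - qfun lam mu t) =
      N / D := by
    rw [hq]
    field_simp
    ring
  have hB : 1 - (1 - qfun lam mu t) * s = B / D := by
    rw [hq]
    field_simp
    ring
  have hBpos : 0 < B := (div_pos_iff_of_pos_right hD).mp (hB ▸ hs)
  rw [hN, hB, hq, div_rpow (by linarith) hD.le, rpow_neg (div_pos hBpos hD).le,
    div_rpow hBpos.le hD.le, inv_div, rpow_add hD, rpow_natCast, div_pow]
  field_simp

end qfun

theorem stmt_2_general (lam mu nu t : ℝ) (i : ℕ) (s : ℝ)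
    (hlam : 0 < lam) (hlm : lam < mu) (ht : 0 ≤ t)
    (hs0 : 0 ≤ s) (hs1 : s < 1) :
    HasSum (fun j : ℕ => pTrans lam mu nu i j t * s ^ j) (G lam mu nu i s t) := by
  have hq0 := qfun_pos hlam.le hlm ht
  have hq1 := qfun_le_one hlam.le hlm ht
  have hxs : |(1 - qfun lam mu t) * s| < 1 := by
    rw [abs_of_nonneg (mul_nonneg (by linarith) hs0)]
    nlinarith
  have hsum := (hasSum_choose_mul_genBinom_convolution (nu / lam) (mu / lam)
    (1 - (mu / lam + 1) * (1 - qfun lam mu t)) (1 - qfun lam mu t) s i hxs).mul_left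
      (qfun lam mu t ^ (nu / lam))
  rw [qfun_rpow_mul_eq_G nu s i hlam hlm ht (by linarith [le_abs_self ((1 - qfun lam mu t) * s)])]
    at hsum
  exact hsum.congr_fun fun j => by rw [pTrans, mul_assoc]

/-- The series `Σ_j p_{i,j}(t) s^j` converges with sum `G_i(s,t)`. -/
theorem stmt_2 (lam mu nu t : ℝ) (i : ℕ) (s : ℝ)
    (hlam : 0 < lam) (hlm : lam < mu) (hnu : 0 < nu) (ht : 0 ≤ t)
    (hs0 : 0 ≤ s) (hs1 : s < 1) :
    HasSum (fun j : ℕ => pTrans lam mu nu i j t * s ^ j) (G lam mu nu i s t) :=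
  stmt_2_general lam mu nu t i s hlam hlm ht hs0 hs1
end

section
/- Let α, β be real numbers with |β| < 1, let i ≥ 1 be a natural number, and let s be a real number with |s| ≤ 1 and 1 − βs ≠ 0. Then the series Σ_{j=0}^{∞} c_j s^j, with coefficients c_j = Σ_{l=0}^{min(i,j)} C(i,l) · C(i+j−l−1, i−1) · α^{i−l} · β^{j−l} · (1−α−β)^l, converges (in the sense of HasSum) with sum equal to ( (α + (1−α−β)s) / (1 − βs) )^i. -/
/-! The pgf factors as `(α + (1-α-β)s)^i · (1-βs)^{-i}`: a polynomial of degree `i` times the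
negative binomial series `Σ_k C(k+i-1, i-1) (βs)^k`, which converges since `|βs| < 1`.
The coefficients `c_j` are exactly those of the Cauchy product of the two, and a Cauchy product
with a polynomial is a finite sum of shifted copies of the series. -/

open Finset

theorem HasSum.ite_le_sub {M : Type*} [AddCommMonoid M] [TopologicalSpace M] {f : ℕ → M} {G : M}
    (hf : HasSum f G) (l : ℕ) :
    HasSum (fun j => if l ≤ j then f (j - l) else 0) G := by
  have hinj : Function.Injective (· + l) := add_left_injective l
  refine (hinj.hasSum_iff fun j hj => ?_).mp (by simpa [Function.comp_def] using hf)
  have hjl : ¬ l ≤ j := fun h => hj ⟨j - l, Nat.sub_add_cancel h⟩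
  simp [hjl]

theorem HasSum.sum_range_mul_pow {R : Type*} [CommSemiring R] [TopologicalSpace R]
    [IsTopologicalSemiring R] {g : ℕ → R} {G x : R} (hg : HasSum (fun k => g k * x ^ k) G)
    (p : ℕ → R) (n : ℕ) :
    HasSum (fun j => (∑ l ∈ range (min n j + 1), p l * g (j - l)) * x ^ j)
      ((∑ l ∈ range (n + 1), p l * x ^ l) * G) := by
  rw [sum_mul]
  refine (hasSum_sum fun l (_ : l ∈ range (n + 1)) =>
    (hg.mul_left (p l * x ^ l)).ite_le_sub l).congr_fun fun j => ?_
  have hrange : (range (n + 1)).filter (· ≤ j) = range (min n j + 1) := by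
    ext l; simp only [mem_filter, mem_range]; omega
  rw [← sum_filter, hrange, sum_mul]
  refine sum_congr rfl fun l hl => ?_
  have hlj : l ≤ j := by simp only [mem_range] at hl; omega
  calc p l * g (j - l) * x ^ j = p l * g (j - l) * (x ^ l * x ^ (j - l)) := by
        rw [← pow_add, Nat.add_sub_cancel' hlj]
    _ = p l * x ^ l * (g (j - l) * x ^ (j - l)) := by ring

theorem hasSum_choose_mul_pow_mul_pow {b s : ℝ} (hbs : |b * s| < 1) {i : ℕ} (hi : 1 ≤ i) :
    HasSum (fun k => ((k + (i - 1)).choose (i - 1) * b ^ k : ℝ) * s ^ k) (((1 - b * s) ^ i)⁻¹) := by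
  have h := hasSum_choose_mul_geometric_of_norm_lt_one (i - 1) (r := b * s) hbs
  rw [Nat.sub_add_cancel hi, one_div] at h
  simpa only [mul_pow, mul_assoc] using h

theorem stmt_5_general (a b : ℝ) (hb : |b| < 1) (i : ℕ) (hi : 1 ≤ i) (s : ℝ)
    (hs : |s| ≤ 1) :
    HasSum
      (fun j : ℕ =>
        (∑ l ∈ Finset.range (min i j + 1),
            (i.choose l : ℝ) * ((i + j - l - 1).choose (i - 1) : ℝ) *
              a ^ (i - l) * b ^ (j - l) * (1 - a - b) ^ l) * s ^ j)
      (((a + (1 - a - b) * s) / (1 - b * s)) ^ i) := by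
  have hbs : |b * s| < 1 := by
    rw [abs_mul]
    nlinarith [abs_nonneg b, abs_nonneg s]
  have h := (hasSum_choose_mul_pow_mul_pow hbs hi).sum_range_mul_pow
    (fun l => (i.choose l : ℝ) * a ^ (i - l) * (1 - a - b) ^ l) i
  have hpoly : ∑ l ∈ range (i + 1), (i.choose l : ℝ) * a ^ (i - l) * (1 - a - b) ^ l * s ^ l
      = (a + (1 - a - b) * s) ^ i := by
    rw [add_comm a, add_pow]
    exact sum_congr rfl fun l _ => by rw [mul_pow]; ring
  rw [hpoly, ← div_eq_mul_inv, ← div_pow] at h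
  refine h.congr_fun fun j => congrArg (· * s ^ j) (sum_congr rfl fun l hl => ?_)
  have hindex : i + j - l - 1 = j - l + (i - 1) := by simp only [mem_range] at hl; omega
  rw [hindex]
  ring

/-- Power series expansion of the probability generating function
`s ↦ ((α + (1-α-β)s)/(1-βs))^i` of the linear birth–death process without immigration:
its coefficients are `c_j = Σ_{l=0}^{min(i,j)} C(i,l) C(i+j-l-1, i-1) α^{i-l} β^{j-l} (1-α-β)^l`. -/
theorem stmt_5 (a b : ℝ) (hb : |b| < 1) (i : ℕ) (hi : 1 ≤ i) (s : ℝ)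
    (hs : |s| ≤ 1) (hbs : 1 - b * s ≠ 0) :
    HasSum
      (fun j : ℕ =>
        (∑ l ∈ Finset.range (min i j + 1),
            (i.choose l : ℝ) * ((i + j - l - 1).choose (i - 1) : ℝ) *
              a ^ (i - l) * b ^ (j - l) * (1 - a - b) ^ l) * s ^ j)
      (((a + (1 - a - b) * s) / (1 - b * s)) ^ i) :=
  stmt_5_general a b hb i hi s hs
end

section
/- Let 0 < λ < μ, ν > 0 be real numbers, t ≥ 0 and i a natural number. Define G_i(s,t) = (μ−λ)^{ν/λ} · ( s(μe^{(λ−μ)t} − λ) − μ(e^{(λ−μ)t} − 1) )^i / ( μ − λe^{(λ−μ)t} + λs(e^{(λ−μ)t} − 1) )^{ν/λ + i} as a function of s on a neighborhood of s = 1. Then the derivative of s ↦ G_i(s,t) at s = 1 equals (ν/(λ−μ))·(e^{(λ−μ)t} − 1) + i·e^{(λ−μ)t}. -/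
open Real

/- Both affine factors of `G_i(·,t)` take the value `μ - λ` at `s = 1`, so the logarithmic
derivative of the quotient is `(i f' - (ν/λ + i) g') / (μ - λ)`; the constant `(μ - λ)^{ν/λ}`
cancels the value `(μ - λ)^{-ν/λ}` of the quotient at `s = 1`. -/

theorem HasDerivAt.pow_div_rpow_add_of_eq {f g : ℝ → ℝ} {f' g' x q : ℝ} {n : ℕ}
    (hf : HasDerivAt f f' x) (hg : HasDerivAt g g' x) (hfg : f x = g x) (hpos : 0 < g x) :
    HasDerivAt (fun s => f s ^ n / g s ^ (q + n))
      (g x ^ (-q) * (n * f' - (q + n) * g') / g x) x := by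
  have hD : HasDerivAt (fun s => g s ^ (q + n)) ((q + n) * g x ^ (q + n - 1) * g') x :=
    (hg.rpow_const (Or.inl hpos.ne')).congr_deriv (by ring)
  refine ((hf.pow n).div hD (rpow_pos_of_pos hpos _).ne').congr_deriv ?_
  rw [Pi.pow_apply, hfg]
  set a := g x
  have hpow : a ^ (q + n) = a ^ q * a ^ n := by rw [rpow_add hpos, rpow_natCast]
  have hpow_sub : a ^ (q + n - 1) = a ^ q * a ^ n / a := by rw [rpow_sub hpos, rpow_one, hpow]
  have hn : (n : ℝ) * a ^ (n - 1) = n * a ^ n / a := by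
    rcases n with _ | n
    · simp
    · rw [pow_succ, Nat.add_sub_cancel]; field_simp [hpos.ne']
  rw [hn, hpow_sub, hpow, rpow_neg hpos.le]
  field_simp [hpos.ne', pow_ne_zero n hpos.ne']

theorem stmt_6_general (lam mu nu t : ℝ) (i : ℕ)
    (hlam : 0 < lam) (hlm : lam < mu) :
    deriv (fun s => G lam mu nu i s t) 1
      = nu / (lam - mu) * (exp ((lam - mu) * t) - 1) + (i : ℝ) * exp ((lam - mu) * t) := by
  set E := exp ((lam - mu) * t)
  have ha : 0 < mu - lam := sub_pos.mpr hlm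
  have hf : HasDerivAt (fun s => s * (mu * E - lam) - mu * (E - 1)) (1 * (mu * E - lam)) 1 :=
    ((hasDerivAt_id 1).mul_const _).sub_const _
  have hg : HasDerivAt (fun s => mu - lam * E + lam * s * (E - 1)) (lam * 1 * (E - 1)) 1 :=
    (((hasDerivAt_id 1).const_mul lam).mul_const _).const_add _
  have hquot := (hf.pow_div_rpow_add_of_eq (q := nu / lam) (n := i) hg (by ring)
    (by linarith)).const_mul ((mu - lam) ^ (nu / lam))
  simp only [← mul_div_assoc] at hquot
  have hG : HasDerivAt (fun s => G lam mu nu i s t) _ 1 := hquot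
  rw [hG.deriv,
    show mu - lam * E + lam * 1 * (E - 1) = mu - lam by ring, ← mul_assoc,
    ← rpow_add ha, add_neg_cancel, rpow_zero]
  field_simp [hlam.ne', ha.ne', (sub_neg.mpr hlm).ne]
  ring

/-- The derivative of `s ↦ G_i(s,t)` at `s = 1` equals the mean
`m(t) = (ν/(λ-μ))(e^{(λ-μ)t} - 1) + i e^{(λ-μ)t}` of the process. -/
theorem stmt_6 (lam mu nu t : ℝ) (i : ℕ)
    (hlam : 0 < lam) (hlm : lam < mu) (hnu : 0 < nu) (ht : 0 ≤ t) :
    deriv (fun s => G lam mu nu i s t) 1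
      = nu / (lam - mu) * (exp ((lam - mu) * t) - 1) + (i : ℝ) * exp ((lam - mu) * t) :=
  stmt_6_general lam mu nu t i hlam hlm
end

section
/- Fix Δt > 0. The map sending (λ, μ, ν) with 0 < λ < μ and ν > 0 to the triple (q^r, r·q^r·(1−q), (μ/λ)·q^r·(1−q)), where q = (μ−λ)/(μ − λe^{(λ−μ)Δt}) and r = ν/λ, is injective on the set {(λ, μ, ν) ∈ ℝ³ : 0 < λ < μ, 0 < ν}. -/
open Real

/-!
Write `q` for the first argument of the power and `r = ν/λ`. The first two coordinates give
`q ^ r` and `r (1 - q)`, hence `r log q` and `r (1 - q)`, and so their quotient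
`log q / (1 - q)`; this is minus the slope of the secant of the strictly concave `log` through
`q` and `1`, hence strictly increasing in `q ∈ (0, 1)`, which determines `q` and then `r`.
The third coordinate then gives `ρ = μ/λ`, and `q = (ρ - 1)/(ρ - exp (λ (1 - ρ) Δt))`
determines `λ` once `ρ ≠ 1` and `Δt ≠ 0` are fixed.
-/

lemma strictMonoOn_log_div_one_sub :
    StrictMonoOn (fun q : ℝ => log q / (1 - q)) (Set.Ioo 0 1) := by
  intro x ⟨hx₀, hx₁⟩ y ⟨hy₀, hy₁⟩ hxy
  have hsecant := strictConcaveOn_log_Ioi.secant_strict_mono (Set.mem_Ioi.2 one_pos)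
    (Set.mem_Ioi.2 hx₀) (Set.mem_Ioi.2 hy₀) hx₁.ne hy₁.ne hxy
  rwa [log_one, sub_zero, sub_zero, ← neg_sub 1 x, ← neg_sub 1 y, div_neg, div_neg,
    neg_lt_neg_iff] at hsecant

lemma eq_and_eq_of_rpow_eq_of_mul_rpow_mul_eq {q₁ q₂ r₁ r₂ : ℝ} (hq₁ : q₁ ∈ Set.Ioo 0 1)
    (hq₂ : q₂ ∈ Set.Ioo 0 1) (hr₁ : 0 < r₁) (hr₂ : 0 < r₂) (h₁ : q₁ ^ r₁ = q₂ ^ r₂)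
    (h₂ : r₁ * q₁ ^ r₁ * (1 - q₁) = r₂ * q₂ ^ r₂ * (1 - q₂)) :
    q₁ = q₂ ∧ r₁ = r₂ := by
  have h1q₁ : 1 - q₁ ≠ 0 := (sub_pos.2 hq₁.2).ne'
  have h1q₂ : 1 - q₂ ≠ 0 := (sub_pos.2 hq₂.2).ne'
  have hlin : r₁ * (1 - q₁) = r₂ * (1 - q₂) := by
    apply mul_left_cancel₀ (rpow_pos_of_pos hq₂.1 r₂).ne'
    linear_combination h₂ - (r₁ * (1 - q₁)) * h₁
  have hlog : r₁ * log q₁ = r₂ * log q₂ := by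
    rw [← log_rpow hq₁.1, ← log_rpow hq₂.1, h₁]
  have hq : q₁ = q₂ := by
    refine strictMonoOn_log_div_one_sub.injOn hq₁ hq₂ ?_
    rw [div_eq_div_iff h1q₁ h1q₂]
    apply mul_left_cancel₀ (mul_pos hr₁ hr₂).ne'
    linear_combination (r₂ * (1 - q₂)) * hlog - (r₂ * log q₂) * hlin
  subst hq
  exact ⟨rfl, mul_right_cancel₀ h1q₁ hlin⟩

/-- The parameter `q` of the transition probabilities of the linear birth-death process with
immigration, with birth rate `l`, death rate `m` and time step `t`. -/
noncomputable def birthDeathQ (l m t : ℝ) : ℝ := (m - l) / (m - l * exp ((l - m) * t))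

lemma birthDeathQ_mem_Ioo {l m t : ℝ} (hl : 0 < l) (hlm : l < m) (ht : 0 < t) :
    birthDeathQ l m t ∈ Set.Ioo 0 1 := by
  have hE : exp ((l - m) * t) < 1 := exp_lt_one_iff.2 (mul_neg_of_neg_of_pos (by linarith) ht)
  have hden : m - l < m - l * exp ((l - m) * t) := by nlinarith
  exact ⟨div_pos (by linarith) (by linarith), (div_lt_one (by linarith)).2 hden⟩

lemma birthDeathQ_eq_of_ne_zero {l : ℝ} (m t : ℝ) (hl : l ≠ 0) :
    birthDeathQ l m t = (m / l - 1) / (m / l - exp (l * (1 - m / l) * t)) := by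
  have hexp : l * (1 - m / l) = l - m := by field_simp
  rw [birthDeathQ, hexp]
  field_simp

lemma eq_of_birthDeathQ_eq_of_div_eq {l₁ l₂ m₁ m₂ t : ℝ} (ht : t ≠ 0) (hl₁ : l₁ ≠ 0)
    (hl₂ : l₂ ≠ 0) (hρ : m₁ / l₁ = m₂ / l₂) (hρ₁ : m₁ / l₁ ≠ 1)
    (hq : birthDeathQ l₁ m₁ t = birthDeathQ l₂ m₂ t) : l₁ = l₂ := by
  rw [birthDeathQ_eq_of_ne_zero m₁ t hl₁, birthDeathQ_eq_of_ne_zero m₂ t hl₂, ← hρ] at hq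
  have hden := inv_inj.1 <|
    mul_left_cancel₀ (sub_ne_zero.2 hρ₁) (by simpa only [div_eq_mul_inv] using hq)
  rw [sub_right_inj, exp_eq_exp] at hden
  exact mul_right_cancel₀ (mul_ne_zero (sub_ne_zero.2 hρ₁.symm) ht) (by linear_combination hden)

/-- Identifiability: the map `(λ, μ, ν) ↦ (p₀₀(Δt), p₀₁(Δt), p₁₀(Δt))` sending the parameters
to the three one-step transition probabilities `q^r`, `r q^r (1-q)`, `(μ/λ) q^r (1-q)`
(with `q = (μ-λ)/(μ - λe^{(λ-μ)Δt})` and `r = ν/λ`) is injective on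
`{(λ, μ, ν) : 0 < λ < μ, 0 < ν}`. -/
theorem stmt_10 (Δt : ℝ) (hΔt : 0 < Δt) :
    Set.InjOn
      (fun p : ℝ × ℝ × ℝ =>
        ((((p.2.1 - p.1) / (p.2.1 - p.1 * exp ((p.1 - p.2.1) * Δt))) ^ (p.2.2 / p.1) : ℝ),
         ((p.2.2 / p.1) *
            ((p.2.1 - p.1) / (p.2.1 - p.1 * exp ((p.1 - p.2.1) * Δt))) ^ (p.2.2 / p.1) *
            (1 - (p.2.1 - p.1) / (p.2.1 - p.1 * exp ((p.1 - p.2.1) * Δt))) : ℝ),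
         ((p.2.1 / p.1) *
            ((p.2.1 - p.1) / (p.2.1 - p.1 * exp ((p.1 - p.2.1) * Δt))) ^ (p.2.2 / p.1) *
            (1 - (p.2.1 - p.1) / (p.2.1 - p.1 * exp ((p.1 - p.2.1) * Δt))) : ℝ)))
      {p : ℝ × ℝ × ℝ | 0 < p.1 ∧ p.1 < p.2.1 ∧ 0 < p.2.2} := by
  rintro ⟨l₁, m₁, n₁⟩ ⟨hl₁, hlm₁, hn₁⟩ ⟨l₂, m₂, n₂⟩ ⟨hl₂, hlm₂, hn₂⟩ heq
  obtain ⟨h₀₀, h₀₁, h₁₀⟩ : _ ∧ _ ∧ _ := by simpa only [Prod.mk.injEq] using heq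
  have hq₁ : birthDeathQ l₁ m₁ Δt ∈ Set.Ioo 0 1 := birthDeathQ_mem_Ioo hl₁ hlm₁ hΔt
  obtain ⟨hq, hr⟩ := eq_and_eq_of_rpow_eq_of_mul_rpow_mul_eq hq₁
    (birthDeathQ_mem_Ioo hl₂ hlm₂ hΔt) (div_pos hn₁ hl₁) (div_pos hn₂ hl₂) h₀₀ h₀₁
  change m₁ / l₁ * birthDeathQ l₁ m₁ Δt ^ (n₁ / l₁) * (1 - birthDeathQ l₁ m₁ Δt) =
    m₂ / l₂ * birthDeathQ l₂ m₂ Δt ^ (n₂ / l₂) * (1 - birthDeathQ l₂ m₂ Δt) at h₁₀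
  rw [← hq, ← hr] at h₁₀
  have hρ : m₁ / l₁ = m₂ / l₂ := mul_right_cancel₀ (rpow_pos_of_pos hq₁.1 _).ne'
    (mul_right_cancel₀ (sub_pos.2 hq₁.2).ne' h₁₀)
  obtain rfl : l₁ = l₂ := eq_of_birthDeathQ_eq_of_div_eq hΔt.ne' hl₁.ne' hl₂.ne' hρ
    ((one_lt_div hl₁).2 hlm₁).ne' hq
  obtain rfl : m₁ = m₂ := (div_left_inj' hl₁.ne').1 hρ
  obtain rfl : n₁ = n₂ := (div_left_inj' hl₁.ne').1 hr
  rfl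
end

section
/- Let S and O be finite types, Q : S → S → ℝ, ψ : S → O → ℝ, ρ : S → ℝ, T ≥ 2 a natural number and y : {1,…,T} → O. For a path z : {1,…,T} → S let w(z) = ρ(z₁)·ψ(z₁, y₁)·∏_{u=2}^{T} Q(z_{u−1}, z_u)·ψ(z_u, y_u). Define the forward quantities α and backward quantities β by the recursions α_s(1) = ρ(s)·ψ(s, y₁), α_s(t) = ψ(s, y_t)·Σ_{s'} α_{s'}(t−1)·Q(s', s) for 2 ≤ t ≤ T, and β_s(T) = 1, β_s(t) = Σ_{s'} Q(s, s')·ψ(s', y_{t+1})·β_{s'}(t+1) for 1 ≤ t ≤ T−1. Then for every 1 ≤ t ≤ T−1 and every s, s' ∈ S, α_s(t)·Q(s, s')·ψ(s', y_{t+1})·β_{s'}(t+1) = Σ over all paths z : {1,…,T} → S with z(t) = s and z(t+1) = s' of w(z). -/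
/-!
Cut a path at the transition `t → t + 1`. Its weight factorises into the weight of the prefix
ending in `s`, the transition weight `Q(s, s') ψ(s', y_{t+1})`, and the weight of the suffix
starting in `s'`, so the constrained path sum is a product of a prefix sum and a suffix sum.
Unrolling the forward recursion shows that the prefix sum is `α_s(t)`; unrolling the backward
recursion shows that the suffix sum is `β_{s'}(t + 1)`.
-/

open Finset

namespace HiddenMarkov

variable {S R : Type*} [CommSemiring R]

theorem snoc_apply_zero {n : ℕ} (z : Fin (n + 1) → S) (a : S) :
    (Fin.snoc z a : Fin (n + 2) → S) 0 = z 0 :=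
  Fin.snoc_castSucc (i := 0) ..

/-- `M n a b` is the weight of the step `a → b` taken at time `n`. -/
def pathWeight (M : ℕ → S → S → R) {n : ℕ} (z : Fin (n + 1) → S) : R :=
  ∏ i : Fin n, M i (z i.castSucc) (z i.succ)

theorem pathWeight_snoc (M : ℕ → S → S → R) {n : ℕ} (z : Fin (n + 1) → S) (a : S) :
    pathWeight M (Fin.snoc z a : Fin (n + 2) → S) = pathWeight M z * M n (z (Fin.last n)) a := by
  simp only [pathWeight, Fin.prod_univ_castSucc, Fin.val_castSucc, Fin.succ_castSucc,
    Fin.snoc_castSucc, Fin.succ_last, Fin.snoc_last, Fin.val_last]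

theorem pathWeight_cons (M : ℕ → S → S → R) {n : ℕ} (a : S) (z : Fin (n + 1) → S) :
    pathWeight M (Fin.cons a z : Fin (n + 2) → S) =
      M 0 a (z 0) * pathWeight (fun i => M (i + 1)) z := by
  simp [pathWeight, Fin.prod_univ_succ]

theorem pathWeight_append (M : ℕ → S → S → R) {p q : ℕ} (a : Fin (p + 1) → S)
    (b : Fin (q + 1) → S) :
    pathWeight (n := p + 1 + q) M (Fin.append a b : Fin (p + 1 + (q + 1)) → S) =
      pathWeight M a * M p (a (Fin.last p)) (b 0) * pathWeight (fun i => M (p + 1 + i)) b := by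
  induction q with
  | zero =>
    rw [Fin.append_right_eq_snoc, pathWeight_snoc]
    simp [pathWeight]
  | succ q ih =>
    obtain ⟨c, x, rfl⟩ : ∃ c x, b = Fin.snoc c x := ⟨Fin.init b, _, (Fin.snoc_init_self b).symm⟩
    have hlast : Fin.append a c (Fin.last (p + 1 + q)) = c (Fin.last q) :=
      Fin.append_right a c (Fin.last q)
    rw [Fin.append_snoc, pathWeight_snoc, pathWeight_snoc, ih]
    -- `Fin.append_snoc` states its length as `Nat.add`
    simp only [Nat.add_eq]
    rw [hlast, snoc_apply_zero]
    ring

theorem pathWeight_eq_prod_attach_range (M : ℕ → S → S → R) {n : ℕ} (z : Fin (n + 1) → S) :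
    pathWeight M z = ∏ u ∈ (range n).attach,
      M u (z ⟨u, by have := mem_range.mp u.2; omega⟩)
        (z ⟨u + 1, by have := mem_range.mp u.2; omega⟩) := by
  rw [← univ_eq_attach]
  exact Fintype.prod_equiv
    (Fin.equivSubtype.trans (Equiv.subtypeEquivRight fun _ => mem_range.symm)) _ _ fun _ => rfl

variable [Fintype S] [DecidableEq S]

theorem sum_filter_fin_one (f : S → R) (s : S) :
    ∑ z : Fin 1 → S with z 0 = s, f (z 0) = f s := by
  rw [sum_filter, ← (Equiv.funUnique (Fin 1) S).symm.sum_comp]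
  simp

theorem forward_eq_sum_pathWeight {α : ℕ → S → R} {M : ℕ → S → S → R} {N n : ℕ}
    (hα : ∀ n < N, ∀ s, α (n + 1) s = ∑ s', α n s' * M n s' s) (hn : n ≤ N) (s : S) :
    α n s = ∑ z : Fin (n + 1) → S with z (Fin.last n) = s, α 0 (z 0) * pathWeight M z := by
  induction n generalizing s with
  | zero => simp [sum_filter_fin_one, pathWeight]
  | succ n ih =>
    rw [hα n (by omega), sum_filter, ← (Fin.snocEquiv fun _ => S).sum_comp,
      Fintype.sum_prod_type, sum_comm]
    simp only [Fin.snocEquiv, Equiv.coe_fn_mk, Fin.snoc_last, sum_ite_eq', mem_univ, if_true,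
      snoc_apply_zero, pathWeight_snoc]
    rw [← sum_fiberwise univ fun z : Fin (n + 1) → S => z (Fin.last n)]
    refine sum_congr rfl fun s' _ => ?_
    rw [ih (by omega), sum_mul]
    refine sum_congr rfl fun z hz => ?_
    rw [(mem_filter.mp hz).2, mul_assoc]

theorem backward_eq_sum_pathWeight {β : ℕ → S → R} {M : ℕ → S → S → R} {N : ℕ}
    (hβ : ∀ n < N, ∀ s, β n s = ∑ s', M n s s' * β (n + 1) s') (n d : ℕ) (hnd : n + d = N)
    (s : S) :
    β n s = ∑ z : Fin (d + 1) → S with z 0 = s,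
      pathWeight (fun i => M (n + i)) z * β N (z (Fin.last d)) := by
  induction d generalizing n s with
  | zero => simp [sum_filter_fin_one, pathWeight, ← hnd]
  | succ d ih =>
    rw [hβ n (by omega), sum_filter, ← (Fin.consEquiv fun _ => S).sum_comp,
      Fintype.sum_prod_type]
    simp only [Fin.consEquiv, Equiv.coe_fn_mk, Fin.cons_zero, Fin.cons_last, pathWeight_cons,
      sum_ite_irrel, sum_const_zero, sum_ite_eq', mem_univ, if_true, add_zero]
    have hshift : (fun i => M (n + (i + 1))) = fun i => M (n + 1 + i) := by
      funext i
      congr 1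
      omega
    rw [← sum_fiberwise univ fun z : Fin (d + 1) → S => z 0]
    refine sum_congr rfl fun s' _ => ?_
    rw [ih (n + 1) (by omega), mul_sum]
    refine sum_congr rfl fun z hz => ?_
    rw [(mem_filter.mp hz).2, hshift, mul_assoc]

theorem sum_pathWeight_transition_eq_forward_mul_backward {α β : ℕ → S → R}
    {M : ℕ → S → S → R} {N : ℕ}
    (hα : ∀ n < N, ∀ s, α (n + 1) s = ∑ s', α n s' * M n s' s)
    (hβ : ∀ n < N, ∀ s, β n s = ∑ s', M n s s' * β (n + 1) s') (i : Fin N) (s s' : S) :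
    ∑ z : Fin (N + 1) → S with z i.castSucc = s ∧ z i.succ = s',
        α 0 (z 0) * pathWeight M z * β N (z (Fin.last N)) =
      α i s * M i s s' * β (i + 1) s' := by
  obtain ⟨p, hp⟩ := i
  obtain ⟨q, rfl⟩ : ∃ q, N = p + 1 + q := ⟨N - (p + 1), by omega⟩
  rw [forward_eq_sum_pathWeight hα hp.le s, backward_eq_sum_pathWeight hβ (p + 1) q rfl s',
    sum_mul, sum_mul_sum, ← sum_product']
  symm
  refine sum_equiv (Fin.appendEquiv (p + 1) (q + 1)) ?_ ?_
  · rintro ⟨a, b⟩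
    have hs : Fin.append a b (Fin.castSucc ⟨p, hp⟩) = a (Fin.last p) :=
      Fin.append_left a b (Fin.last p)
    have hs' : Fin.append a b (Fin.succ ⟨p, hp⟩) = b 0 := Fin.append_right a b 0
    simp only [mem_product, mem_filter, mem_univ, true_and, Fin.appendEquiv_apply]
    rw [hs, hs']
  · rintro ⟨a, b⟩ hab
    have h0 : Fin.append a b 0 = a 0 := Fin.append_left a b 0
    have hlast : Fin.append a b (Fin.last (p + 1 + q)) = b (Fin.last q) :=
      Fin.append_right a b (Fin.last q)
    simp only [mem_product, mem_filter, mem_univ, true_and] at hab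
    -- `Fin.appendEquiv_apply` does not fire: here the equivalence is typed at `Fin (p + 1 + q + 1)`
    simp only [Fin.appendEquiv, Equiv.coe_fn_mk]
    rw [h0, hlast, pathWeight_append, hab.1, hab.2]
    ring

end HiddenMarkov

/-- Baum-Welch joint-transition identity: for `1 ≤ t ≤ T-1` and states `s, s'`, the product
`α_s(t) Q(s,s') ψ(s',y_{t+1}) β_{s'}(t+1)` equals the sum of the path weights
`w(z) = ρ(z₁) ψ(z₁,y₁) ∏_{u=2}^{T} Q(z_{u-1},z_u) ψ(z_u,y_u)` over all hidden paths
`z : {1,…,T} → S` with `z(t) = s` and `z(t+1) = s'` (encoded as `z : Fin T → S`, `z k`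
being the state at time `k+1`). -/
theorem stmt_15 {S O : Type*} [Fintype S] [DecidableEq S]
    (Q : S → S → ℝ) (ψ : S → O → ℝ) (ρ : S → ℝ) (T : ℕ)
    (y : ℕ → O) (α β : ℕ → S → ℝ)
    (hα1 : ∀ s : S, α 1 s = ρ s * ψ s (y 1))
    (hαrec : ∀ t, ∀ _ht1 : 2 ≤ t, ∀ _ht2 : t ≤ T, ∀ s : S,
      α t s = ψ s (y t) * ∑ s' : S, α (t - 1) s' * Q s' s)
    (hβT : ∀ s : S, β T s = 1)
    (hβrec : ∀ t, ∀ _ht1 : 1 ≤ t, ∀ _ht2 : t ≤ T - 1, ∀ s : S,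
      β t s = ∑ s' : S, Q s s' * ψ s' (y (t + 1)) * β (t + 1) s') :
    ∀ t, ∀ _ht1 : 1 ≤ t, ∀ _ht2 : t ≤ T - 1, ∀ s s' : S,
      α t s * Q s s' * ψ s' (y (t + 1)) * β (t + 1) s'
        = ∑ z ∈ Finset.univ.filter
              (fun z : Fin T → S => z ⟨t - 1, by omega⟩ = s ∧ z ⟨t, by omega⟩ = s'),
            ρ (z ⟨0, by omega⟩) * ψ (z ⟨0, by omega⟩) (y 1) *
              ∏ u ∈ (Finset.range (T - 1)).attach,
                Q (z ⟨u.1, by have := Finset.mem_range.mp u.2; omega⟩)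
                    (z ⟨u.1 + 1, by have := Finset.mem_range.mp u.2; omega⟩) *
                  ψ (z ⟨u.1 + 1, by have := Finset.mem_range.mp u.2; omega⟩) (y (u.1 + 2)) := by
  intro t ht1 ht2 s s'
  obtain ⟨N, rfl⟩ : ∃ N, T = N + 1 := ⟨T - 1, by omega⟩
  obtain ⟨p, rfl⟩ : ∃ p, t = p + 1 := ⟨t - 1, by omega⟩
  -- zero-based time: `α (n + 1)`, `β (n + 1)`, and the step weight at time `n`
  set M : ℕ → S → S → ℝ := fun n a b => Q a b * ψ b (y (n + 2)) with hM
  have hfwd : ∀ n < N, ∀ s, α (n + 1 + 1) s = ∑ s', α (n + 1) s' * M n s' s := by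
    intro n hn s
    rw [hαrec (n + 1 + 1) (by omega) (by omega), Nat.add_sub_cancel, mul_sum]
    exact sum_congr rfl fun _ _ => by rw [hM]; ring
  have hbwd : ∀ n < N, ∀ s, β (n + 1) s = ∑ s', M n s s' * β (n + 1 + 1) s' :=
    fun n hn s => hβrec (n + 1) (by omega) (by omega) s
  have hξ := HiddenMarkov.sum_pathWeight_transition_eq_forward_mul_backward
    (α := fun n => α (n + 1)) (β := fun n => β (n + 1)) hfwd hbwd ⟨p, by omega⟩ s s'
  simp only [Nat.add_sub_cancel] at hξ ⊢
  rw [mul_assoc _ (Q s s'), ← hξ]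
  refine sum_congr (filter_congr fun z _ => Iff.rfl) fun z _ => ?_
  rw [hα1, hβT, mul_one, HiddenMarkov.pathWeight_eq_prod_attach_range]
  rfl
end
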